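/- arXiv:1902.00710 — 5 statements merged into one kernel-verified Lean document; each statement's English description precedes it below -/
import Mathlib

section
/- The vector field b defined on ℝ³ by b(x,y,z) = (-sgn(z)·x/z², -sgn(z)·y/z², -2/|z|) for (x,y,z) in the double paraboloid P = {x²+y² ≤ |z|} with z ≠ 0, and b = 0 outside P, is divergence-free in the domain where it is differentiable, i.e., for every point (x,y,z) in the interior of P with z ≠ 0, the sum ∂₁b₁ + ∂₂b₂ + ∂₃b₃ equals 0. -/
open Real

/-- The double paraboloid `P = {x² + y² ≤ |z|}`. -/
def Pset : Set (ℝ × ℝ × ℝ) := {p | p.1 ^ 2 + p.2.1 ^ 2 ≤ |p.2.2|}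

open Classical in
noncomputable def bfield (p : ℝ × ℝ × ℝ) : ℝ × ℝ × ℝ :=
  if p ∈ Pset ∧ p.2.2 ≠ 0 then
    (-Real.sign p.2.2 * p.1 / p.2.2 ^ 2,
     -Real.sign p.2.2 * p.2.1 / p.2.2 ^ 2,
     -2 / |p.2.2|)
  else (0, 0, 0)

/-- `b` is divergence-free at every interior point of `P` with `z ≠ 0`. -/
theorem bfield_divergence_free (x y z : ℝ) (hz : z ≠ 0)
    (hint : (x, y, z) ∈ interior Pset) :
    deriv (fun s => (bfield (s, y, z)).1) x
      + deriv (fun s => (bfield (x, s, z)).2.1) y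
      + deriv (fun s => (bfield (x, y, s)).2.2) z = 0 := by
  have hP : Pset ∈ nhds (x, y, z) := mem_interior_iff_mem_nhds.mp hint
  -- sign facts
  have hsign : Real.sign z = 1 ∨ Real.sign z = -1 := by
    rcases hz.lt_or_gt with h | h
    · right; exact Real.sign_of_neg h
    · left; exact Real.sign_of_pos h
  -- first coordinate
  have h1 : (fun s => (bfield (s, y, z)).1) =ᶠ[nhds x]
      fun s => -Real.sign z * s / z ^ 2 := by
    have hc : ContinuousAt (fun s : ℝ => (s, y, z)) x := by fun_prop
    filter_upwards [hc.preimage_mem_nhds hP] with s hs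
    rw [bfield, if_pos ⟨hs, hz⟩]
  have h2 : (fun s => (bfield (x, s, z)).2.1) =ᶠ[nhds y]
      fun s => -Real.sign z * s / z ^ 2 := by
    have hc : ContinuousAt (fun s : ℝ => (x, s, z)) y := by fun_prop
    filter_upwards [hc.preimage_mem_nhds hP] with s hs
    rw [bfield, if_pos ⟨hs, hz⟩]
  have h3 : (fun s => (bfield (x, y, s)).2.2) =ᶠ[nhds z]
      fun s => -2 * Real.sign z * s⁻¹ := by
    have hc : ContinuousAt (fun s : ℝ => (x, y, s)) z := by fun_prop
    have hmem := hc.preimage_mem_nhds hP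
    rcases hz.lt_or_gt with h | h
    · have hneg : ∀ᶠ s in nhds z, s < 0 := eventually_lt_nhds h
      filter_upwards [hmem, hneg] with s hs hs0
      simp only [bfield, Set.mem_preimage.mp hs, hs0.ne, ne_eq, not_false_iff,
        and_true, if_true]
      rw [abs_of_neg hs0, Real.sign_of_neg h]
      field_simp
    · have hpos : ∀ᶠ s in nhds z, 0 < s := eventually_gt_nhds h
      filter_upwards [hmem, hpos] with s hs hs0
      simp only [bfield, Set.mem_preimage.mp hs, hs0.ne', ne_eq, not_false_iff,
        and_true, if_true]
      rw [abs_of_pos hs0, Real.sign_of_pos h]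
      field_simp
  rw [h1.deriv_eq, h2.deriv_eq, h3.deriv_eq]
  have d1 : deriv (fun s : ℝ => -Real.sign z * s / z ^ 2) x
      = -Real.sign z / z ^ 2 := by
    have : HasDerivAt (fun s : ℝ => -Real.sign z * s / z ^ 2)
        (-Real.sign z * 1 / z ^ 2) x :=
      ((hasDerivAt_id x).const_mul (-Real.sign z)).div_const (z ^ 2)
    simpa using this.deriv
  have d2 : deriv (fun s : ℝ => -Real.sign z * s / z ^ 2) y
      = -Real.sign z / z ^ 2 := by
    have : HasDerivAt (fun s : ℝ => -Real.sign z * s / z ^ 2)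
        (-Real.sign z * 1 / z ^ 2) y :=
      ((hasDerivAt_id y).const_mul (-Real.sign z)).div_const (z ^ 2)
    simpa using this.deriv
  have d3 : deriv (fun s : ℝ => -2 * Real.sign z * s⁻¹) z
      = 2 * Real.sign z / z ^ 2 := by
    have : HasDerivAt (fun s : ℝ => -2 * Real.sign z * s⁻¹)
        (-2 * Real.sign z * (-(z ^ 2)⁻¹)) z :=
      (hasDerivAt_inv hz).const_mul (-2 * Real.sign z)
    have := this.deriv
    rw [this]; ring
  rw [d1, d2, d3]
  ring
end

section
/- For every (x,y,z) ∈ ℝ³ with x² + y² ≤ -z and z < 0, the curve X(t) = (x·(z²+4t)^{1/4}/√(-z), y·(z²+4t)^{1/4}/√(-z), -√(z²+4t)) defined for t ≥ 0 satisfies X(0) = (x,y,z) and X'(t) = b(X(t)) for all t > 0, where b(u,v,w) = (u/w², v/w², 2/w) for w < 0 (i.e., b restricted to the lower paraboloid P⁻). -/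
/-!
With `s = z² + 4t` the curve is `X = (x s^{1/4}/√(-z), y s^{1/4}/√(-z), -√s)`. Since `ds/dt = 4`,
the chain rule gives `d/dt s^{1/4} = s^{1/4}/s` and `d/dt (-√s) = -2/√s`, and `s = X₃²`, so these
are exactly `X₁/X₃²`, `X₂/X₃²` and `2/X₃`. At `t = 0`, `s = z²` with `z < 0`, so
`s^{1/4} = √(-z)` and `-√s = z`.
-/

open Real

lemma hasDerivAt_const_mul_rpow_affine (k c a p : ℝ) {t : ℝ} (h : 0 < c + a * t) :
    HasDerivAt (fun t : ℝ => k * (c + a * t) ^ p) (k * (p * a) * (c + a * t) ^ p / (c + a * t))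
      t := by
  have hin : HasDerivAt (fun t : ℝ => c + a * t) a t := by
    simpa using ((hasDerivAt_id t).const_mul a).const_add c
  refine ((hin.rpow_const (Or.inl h.ne')).const_mul k).congr_deriv ?_
  rw [rpow_sub_one h.ne']
  ring

lemma hasDerivAt_neg_sqrt_affine (c a : ℝ) {t : ℝ} (h : 0 < c + a * t) :
    HasDerivAt (fun t : ℝ => -√(c + a * t)) (a / 2 / -√(c + a * t)) t := by
  have hin : HasDerivAt (fun t : ℝ => c + a * t) a t := by
    simpa using ((hasDerivAt_id t).const_mul a).const_add c
  refine (hin.sqrt h.ne').neg.congr_deriv ?_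
  rw [div_neg, div_div]

lemma rpow_quarter_sq {a : ℝ} (ha : 0 ≤ a) : (a ^ 2) ^ ((1 : ℝ) / 4) = √a := by
  rw [← rpow_natCast, ← rpow_mul ha, sqrt_eq_rpow]
  norm_num

theorem flow_lower_paraboloid_general (x y z : ℝ) (hz : z < 0) :
    (fun t : ℝ => (x / Real.sqrt (-z) * (z ^ 2 + 4 * t) ^ ((1 : ℝ) / 4),
        y / Real.sqrt (-z) * (z ^ 2 + 4 * t) ^ ((1 : ℝ) / 4),
        -Real.sqrt (z ^ 2 + 4 * t))) 0 = (x, y, z) ∧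
    ∀ t : ℝ, 0 < t →
      HasDerivAt (fun t : ℝ => ((x / Real.sqrt (-z) * (z ^ 2 + 4 * t) ^ ((1 : ℝ) / 4),
          y / Real.sqrt (-z) * (z ^ 2 + 4 * t) ^ ((1 : ℝ) / 4),
          -Real.sqrt (z ^ 2 + 4 * t)) : ℝ × ℝ × ℝ))
        (((x / Real.sqrt (-z) * (z ^ 2 + 4 * t) ^ ((1 : ℝ) / 4)) /
            (-Real.sqrt (z ^ 2 + 4 * t)) ^ 2,
          (y / Real.sqrt (-z) * (z ^ 2 + 4 * t) ^ ((1 : ℝ) / 4)) /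
            (-Real.sqrt (z ^ 2 + 4 * t)) ^ 2,
          2 / (-Real.sqrt (z ^ 2 + 4 * t)))) t := by
  have hnz : 0 < -z := neg_pos.mpr hz
  refine ⟨?_, fun t ht => ?_⟩
  · have hz2 : z ^ 2 + 4 * 0 = (-z) ^ 2 := by ring
    have hsqrt : √(-z) ≠ 0 := (sqrt_pos.mpr hnz).ne'
    simp only [hz2, rpow_quarter_sq hnz.le, sqrt_sq hnz.le, neg_neg, div_mul_cancel₀ _ hsqrt]
  · have hs : 0 < z ^ 2 + 4 * t := by positivity
    have hX₃sq : (-√(z ^ 2 + 4 * t)) ^ 2 = z ^ 2 + 4 * t := by rw [neg_sq, sq_sqrt hs.le]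
    have hcoord (k : ℝ) : HasDerivAt (fun t : ℝ => k * (z ^ 2 + 4 * t) ^ ((1 : ℝ) / 4))
        (k * (z ^ 2 + 4 * t) ^ ((1 : ℝ) / 4) / (-√(z ^ 2 + 4 * t)) ^ 2) t :=
      (hasDerivAt_const_mul_rpow_affine k _ _ _ hs).congr_deriv (by rw [hX₃sq]; ring)
    exact (hcoord _).prodMk ((hcoord _).prodMk
      ((hasDerivAt_neg_sqrt_affine _ _ hs).congr_deriv (by norm_num)))

/-- On the lower paraboloid the explicit curve
`X(t) = (x(z²+4t)^{1/4}/√(-z), y(z²+4t)^{1/4}/√(-z), -√(z²+4t))`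
starts at `(x,y,z)` and solves `X' = b(X)` with `b(u,v,w) = (u/w², v/w², 2/w)`. -/
theorem flow_lower_paraboloid (x y z : ℝ) (hz : z < 0) (hP : x ^ 2 + y ^ 2 ≤ -z) :
    (fun t : ℝ => (x / Real.sqrt (-z) * (z ^ 2 + 4 * t) ^ ((1 : ℝ) / 4),
        y / Real.sqrt (-z) * (z ^ 2 + 4 * t) ^ ((1 : ℝ) / 4),
        -Real.sqrt (z ^ 2 + 4 * t))) 0 = (x, y, z) ∧
    ∀ t : ℝ, 0 < t →
      HasDerivAt (fun t : ℝ => ((x / Real.sqrt (-z) * (z ^ 2 + 4 * t) ^ ((1 : ℝ) / 4),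
          y / Real.sqrt (-z) * (z ^ 2 + 4 * t) ^ ((1 : ℝ) / 4),
          -Real.sqrt (z ^ 2 + 4 * t)) : ℝ × ℝ × ℝ))
        (((x / Real.sqrt (-z) * (z ^ 2 + 4 * t) ^ ((1 : ℝ) / 4)) /
            (-Real.sqrt (z ^ 2 + 4 * t)) ^ 2,
          (y / Real.sqrt (-z) * (z ^ 2 + 4 * t) ^ ((1 : ℝ) / 4)) /
            (-Real.sqrt (z ^ 2 + 4 * t)) ^ 2,
          2 / (-Real.sqrt (z ^ 2 + 4 * t)))) t :=
  flow_lower_paraboloid_general x y z hz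
end

section
/- For every (x,y,z) ∈ ℝ³ with x² + y² ≤ z and z > 0, the curve X(t) = (x·(z²-4t)^{1/4}/√z, y·(z²-4t)^{1/4}/√z, √(z²-4t)) defined for 0 ≤ t < z²/4 satisfies X(0) = (x,y,z) and X'(t) = b(X(t)) for all 0 < t < z²/4, where b(u,v,w) = (-u/w², -v/w², -2/w) for w > 0. Moreover X(t) → (0,0,0) as t → z²/4. -/
open Real Filter

/-! With `s(t) = z² - 4t` we have `s' = -4`, so `(s^{1/4})' = -s^{1/4}/s` and `(√s)' = -2/√s`;
since `s = (√s)²`, this is exactly `X' = b(X)`. The initial value comes from `(z²)^{1/4} = √z`,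
and the limit from continuity of `s ↦ s^{1/4}` and `√` at `s = 0`. -/

theorem rpow_quarter_sq_s2 {z : ℝ} (hz : 0 ≤ z) : (z ^ 2) ^ ((1 : ℝ) / 4) = √z := by
  rw [← rpow_natCast, ← rpow_mul hz, sqrt_eq_rpow]
  norm_num

theorem hasDerivAt_sub_mul (a k t : ℝ) : HasDerivAt (fun t => a - k * t) (-k) t := by
  simpa using ((hasDerivAt_id t).const_mul k).const_sub a

theorem hasDerivAt_rpow_sub_mul {a k t : ℝ} (p : ℝ) (h : 0 < a - k * t) :
    HasDerivAt (fun t => (a - k * t) ^ p) (-(k * p) * (a - k * t) ^ p / (a - k * t)) t := by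
  refine ((hasDerivAt_sub_mul a k t).rpow_const (p := p) (Or.inl h.ne')).congr_deriv ?_
  rw [rpow_sub h, rpow_one]
  ring

theorem tendsto_sub_mul_nhds_zero {a k : ℝ} (hk : k ≠ 0) :
    Tendsto (fun t => a - k * t) (nhds (a / k)) (nhds 0) := by
  refine (continuous_const.sub (continuous_const.mul continuous_id)).tendsto' _ _ ?_
  simp [mul_div_cancel₀ a hk]

theorem hasDerivAt_const_mul_rpow_quarter (a c : ℝ) {t : ℝ} (ht : t < a / 4) :
    HasDerivAt (fun t => c * (a - 4 * t) ^ ((1 : ℝ) / 4))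
      (-(c * (a - 4 * t) ^ ((1 : ℝ) / 4)) / √(a - 4 * t) ^ 2) t := by
  have hs : 0 < a - 4 * t := by linarith
  refine ((hasDerivAt_rpow_sub_mul (1 / 4) hs).const_mul c).congr_deriv ?_
  rw [sq_sqrt hs.le]
  ring

theorem hasDerivAt_sqrt_sub_four_mul (a : ℝ) {t : ℝ} (ht : t < a / 4) :
    HasDerivAt (fun t => √(a - 4 * t)) (-2 / √(a - 4 * t)) t := by
  refine ((hasDerivAt_sub_mul a 4 t).sqrt (by linarith)).congr_deriv ?_
  ring

theorem tendsto_rpow_quarter_sub_four_mul (a : ℝ) :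
    Tendsto (fun t => (a - 4 * t) ^ ((1 : ℝ) / 4)) (nhds (a / 4)) (nhds 0) := by
  have h := (continuousAt_rpow_const 0 ((1 : ℝ) / 4) (Or.inr (by norm_num))).tendsto.comp
    (tendsto_sub_mul_nhds_zero (a := a) (k := 4) four_ne_zero)
  rwa [zero_rpow (by norm_num)] at h

theorem tendsto_sqrt_sub_four_mul (a : ℝ) :
    Tendsto (fun t => √(a - 4 * t)) (nhds (a / 4)) (nhds 0) := by
  simpa only [sqrt_zero, Function.comp_def] using (continuous_sqrt.tendsto 0).comp
    (tendsto_sub_mul_nhds_zero (a := a) (k := 4) four_ne_zero)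

theorem flow_upper_paraboloid_general (x y z : ℝ) (hz : 0 < z) :
    (fun t : ℝ => ((x / Real.sqrt z * (z ^ 2 - 4 * t) ^ ((1 : ℝ) / 4),
        y / Real.sqrt z * (z ^ 2 - 4 * t) ^ ((1 : ℝ) / 4),
        Real.sqrt (z ^ 2 - 4 * t)) : ℝ × ℝ × ℝ)) 0 = (x, y, z) ∧
    (∀ t : ℝ, 0 < t → t < z ^ 2 / 4 →
      HasDerivAt (fun t : ℝ => ((x / Real.sqrt z * (z ^ 2 - 4 * t) ^ ((1 : ℝ) / 4),
          y / Real.sqrt z * (z ^ 2 - 4 * t) ^ ((1 : ℝ) / 4),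
          Real.sqrt (z ^ 2 - 4 * t)) : ℝ × ℝ × ℝ))
        ((-(x / Real.sqrt z * (z ^ 2 - 4 * t) ^ ((1 : ℝ) / 4)) /
            Real.sqrt (z ^ 2 - 4 * t) ^ 2,
          -(y / Real.sqrt z * (z ^ 2 - 4 * t) ^ ((1 : ℝ) / 4)) /
            Real.sqrt (z ^ 2 - 4 * t) ^ 2,
          -2 / Real.sqrt (z ^ 2 - 4 * t))) t) ∧
    Tendsto (fun t : ℝ => ((x / Real.sqrt z * (z ^ 2 - 4 * t) ^ ((1 : ℝ) / 4),
        y / Real.sqrt z * (z ^ 2 - 4 * t) ^ ((1 : ℝ) / 4),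
        Real.sqrt (z ^ 2 - 4 * t)) : ℝ × ℝ × ℝ))
      (nhdsWithin (z ^ 2 / 4) (Set.Iio (z ^ 2 / 4))) (nhds ((0, 0, 0) : ℝ × ℝ × ℝ)) := by
  refine ⟨?_, fun t _ ht => ?_, ?_⟩
  · have hzs : √z ≠ 0 := (sqrt_pos.2 hz).ne'
    simp only [mul_zero, sub_zero, rpow_quarter_sq_s2 hz.le, div_mul_cancel₀ _ hzs, sqrt_sq hz.le]
  · exact (hasDerivAt_const_mul_rpow_quarter _ _ ht).prodMk
      ((hasDerivAt_const_mul_rpow_quarter _ _ ht).prodMk (hasDerivAt_sqrt_sub_four_mul _ ht))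
  · have hr := (tendsto_rpow_quarter_sub_four_mul (z ^ 2)).mono_left
      (nhdsWithin_le_nhds (s := Set.Iio (z ^ 2 / 4)))
    have hx := hr.const_mul (x / √z)
    have hy := hr.const_mul (y / √z)
    rw [mul_zero] at hx hy
    exact hx.prodMk_nhds (hy.prodMk_nhds
      ((tendsto_sqrt_sub_four_mul (z ^ 2)).mono_left nhdsWithin_le_nhds))

/-- On the upper paraboloid the explicit curve
`X(t) = (x(z²-4t)^{1/4}/√z, y(z²-4t)^{1/4}/√z, √(z²-4t))`, `0 ≤ t < z²/4`,
starts at `(x,y,z)`, solves `X' = b(X)` with `b(u,v,w) = (-u/w², -v/w², -2/w)`,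
and tends to the origin as `t → z²/4`. -/
theorem flow_upper_paraboloid (x y z : ℝ) (hz : 0 < z) (hP : x ^ 2 + y ^ 2 ≤ z) :
    (fun t : ℝ => ((x / Real.sqrt z * (z ^ 2 - 4 * t) ^ ((1 : ℝ) / 4),
        y / Real.sqrt z * (z ^ 2 - 4 * t) ^ ((1 : ℝ) / 4),
        Real.sqrt (z ^ 2 - 4 * t)) : ℝ × ℝ × ℝ)) 0 = (x, y, z) ∧
    (∀ t : ℝ, 0 < t → t < z ^ 2 / 4 →
      HasDerivAt (fun t : ℝ => ((x / Real.sqrt z * (z ^ 2 - 4 * t) ^ ((1 : ℝ) / 4),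
          y / Real.sqrt z * (z ^ 2 - 4 * t) ^ ((1 : ℝ) / 4),
          Real.sqrt (z ^ 2 - 4 * t)) : ℝ × ℝ × ℝ))
        ((-(x / Real.sqrt z * (z ^ 2 - 4 * t) ^ ((1 : ℝ) / 4)) /
            Real.sqrt (z ^ 2 - 4 * t) ^ 2,
          -(y / Real.sqrt z * (z ^ 2 - 4 * t) ^ ((1 : ℝ) / 4)) /
            Real.sqrt (z ^ 2 - 4 * t) ^ 2,
          -2 / Real.sqrt (z ^ 2 - 4 * t))) t) ∧
    Tendsto (fun t : ℝ => ((x / Real.sqrt z * (z ^ 2 - 4 * t) ^ ((1 : ℝ) / 4),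
        y / Real.sqrt z * (z ^ 2 - 4 * t) ^ ((1 : ℝ) / 4),
        Real.sqrt (z ^ 2 - 4 * t)) : ℝ × ℝ × ℝ))
      (nhdsWithin (z ^ 2 / 4) (Set.Iio (z ^ 2 / 4))) (nhds ((0, 0, 0) : ℝ × ℝ × ℝ)) :=
  flow_upper_paraboloid_general x y z hz
end

section
/- Let Θ ∈ ℝ and z > 0 with x² + y² ≤ z. Define X on [0,∞) by: X(t) = ((x/√z)(z²-4t)^{1/4}, (y/√z)(z²-4t)^{1/4}, √(z²-4t)) for t ∈ [0, z²/4], and X(t) = ((4t-z²)^{1/4}/√z · (x cos Θ − y sin Θ), (4t-z²)^{1/4}/√z · (x sin Θ + y cos Θ), −√(4t-z²)) for t ≥ z²/4. Then X is continuous on [0,∞), differentiable on (0,∞) \ {z²/4}, and satisfies the ODE X'(t) = b(X(t)) at every t ∈ (0,∞) \ {z²/4}; in particular X is an absolutely continuous integral solution of the ODE with X(0) = (x,y,z). -/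
open Real

open Classical in
/-- The piecewise trajectory through the origin rotated by `Θ`. -/
noncomputable def XΘ (Θ x y z : ℝ) (t : ℝ) : ℝ × ℝ × ℝ :=
  if t ≤ z ^ 2 / 4 then
    (x / Real.sqrt z * (z ^ 2 - 4 * t) ^ ((1 : ℝ) / 4),
     y / Real.sqrt z * (z ^ 2 - 4 * t) ^ ((1 : ℝ) / 4),
     Real.sqrt (z ^ 2 - 4 * t))
  else
    ((4 * t - z ^ 2) ^ ((1 : ℝ) / 4) / Real.sqrt z * (x * Real.cos Θ - y * Real.sin Θ),
     (4 * t - z ^ 2) ^ ((1 : ℝ) / 4) / Real.sqrt z * (x * Real.sin Θ + y * Real.cos Θ),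
     -Real.sqrt (4 * t - z ^ 2))

/-!
Each branch of `XΘ` has the form `(a s^{1/4}, b s^{1/4}, σ √s)` with `σ = ±1` and `s' = -4σ`,
where `a² + b² ≤ 1` because `x² + y² ≤ z` and the rotation by `Θ` preserves `x² + y²`. Along
such a curve `(σ √s)² = s` and `sign (σ √s) = σ`, so the chain rule for `s^{1/4}` and `√s`
reproduces the field `b` exactly. Both branches vanish at `t = z²/4`, which gives continuity.
-/

noncomputable def arcPoint (a b σ s : ℝ) : ℝ × ℝ × ℝ :=
  (a * s ^ (1 / 4 : ℝ), b * s ^ (1 / 4 : ℝ), σ * √s)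

lemma rpow_quarter_sq_s4 {s : ℝ} (hs : 0 ≤ s) : (s ^ (1 / 4 : ℝ)) ^ 2 = √s := by
  rw [← Real.rpow_natCast, ← Real.rpow_mul hs, Real.sqrt_eq_rpow]
  norm_num

lemma sq_rpow_quarter {z : ℝ} (hz : 0 ≤ z) : (z ^ 2) ^ (1 / 4 : ℝ) = √z := by
  rw [← Real.rpow_natCast, ← Real.rpow_mul hz, Real.sqrt_eq_rpow]
  norm_num

lemma arcPoint_zero (a b σ : ℝ) : arcPoint a b σ 0 = (0, 0, 0) := by
  simp [arcPoint, Real.zero_rpow]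

lemma continuous_arcPoint (a b σ : ℝ) : Continuous (arcPoint a b σ) := by
  have hq : Continuous fun s : ℝ => s ^ (1 / 4 : ℝ) :=
    continuous_id.rpow_const fun _ => Or.inr (by norm_num)
  exact (continuous_const.mul hq).prodMk
    ((continuous_const.mul hq).prodMk (continuous_const.mul Real.continuous_sqrt))

lemma arcPoint_mem_Pset {a b σ s : ℝ} (hσ : |σ| = 1) (hab : a ^ 2 + b ^ 2 ≤ 1) (hs : 0 ≤ s) :
    arcPoint a b σ s ∈ Pset := by
  have hnorm : (a * s ^ (1 / 4 : ℝ)) ^ 2 + (b * s ^ (1 / 4 : ℝ)) ^ 2 = (a ^ 2 + b ^ 2) * √s := by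
    rw [mul_pow, mul_pow, rpow_quarter_sq_s4 hs]
    ring
  simp only [Pset, arcPoint, Set.mem_ofPred_eq, hnorm, abs_mul, hσ, one_mul,
    abs_of_nonneg (Real.sqrt_nonneg s)]
  exact mul_le_of_le_one_left (Real.sqrt_nonneg s) hab

lemma bfield_arcPoint {a b σ s : ℝ} (hσ : |σ| = 1) (hab : a ^ 2 + b ^ 2 ≤ 1) (hs : 0 < s) :
    bfield (arcPoint a b σ s) =
      (-σ * a * s ^ (1 / 4 : ℝ) / s, -σ * b * s ^ (1 / 4 : ℝ) / s, -2 / √s) := by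
  have hroot : 0 < √s := Real.sqrt_pos.2 hs
  have hsign : Real.sign (σ * √s) = σ := by
    rcases abs_eq (zero_le_one' ℝ) |>.1 hσ with rfl | rfl
    · simp [Real.sign_of_pos hroot]
    · simp [Real.sign_of_neg (neg_lt_zero.2 hroot)]
  have hσ2 : σ ^ 2 = 1 := by rw [← sq_abs, hσ, one_pow]
  have hw : σ * √s ≠ 0 := mul_ne_zero (by rintro rfl; simp at hσ) hroot.ne'
  rw [bfield, if_pos ⟨arcPoint_mem_Pset hσ hab hs.le, hw⟩]
  simp only [arcPoint, hsign, mul_pow, hσ2, Real.sq_sqrt hs.le, one_mul, abs_mul, hσ,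
    abs_of_pos hroot]
  ring_nf

theorem hasDerivAt_arcPoint_comp {a b σ : ℝ} {s : ℝ → ℝ} {t : ℝ} (hσ : |σ| = 1)
    (hab : a ^ 2 + b ^ 2 ≤ 1) (hs : HasDerivAt s (-4 * σ) t) (hst : 0 < s t) :
    HasDerivAt (fun τ => arcPoint a b σ (s τ)) (bfield (arcPoint a b σ (s t))) t := by
  have hq := hs.rpow_const (p := 1 / 4) (Or.inl hst.ne')
  have hσ2 : σ * σ = 1 := by rw [← abs_mul_abs_self, hσ, one_mul]
  refine ((hq.const_mul a).prodMk ((hq.const_mul b).prodMk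
    ((hs.sqrt hst.ne').const_mul σ))).congr_deriv ?_
  rw [bfield_arcPoint hσ hab hst, Real.rpow_sub hst, Real.rpow_one]
  have hroot : √(s t) ≠ 0 := (Real.sqrt_pos.2 hst).ne'
  refine Prod.ext ?_ (Prod.ext ?_ ?_)
  · field_simp
  · field_simp
  · field_simp
    linear_combination -4 * hσ2

lemma rotation_sq_add_sq (Θ x y : ℝ) :
    (x * cos Θ - y * sin Θ) ^ 2 + (x * sin Θ + y * cos Θ) ^ 2 = x ^ 2 + y ^ 2 := by
  linear_combination (x ^ 2 + y ^ 2) * sin_sq_add_cos_sq Θ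

lemma div_sqrt_sq_add_div_sqrt_sq_le_one {x y z : ℝ} (hz : 0 < z) (hP : x ^ 2 + y ^ 2 ≤ z) :
    (x / √z) ^ 2 + (y / √z) ^ 2 ≤ 1 := by
  rw [div_pow, div_pow, Real.sq_sqrt hz.le, ← add_div, div_le_one hz]
  exact hP

lemma XΘ_eq_ite (Θ x y z : ℝ) :
    XΘ Θ x y z = fun t => if t ≤ z ^ 2 / 4
      then arcPoint (x / √z) (y / √z) 1 (z ^ 2 - 4 * t)
      else arcPoint ((x * cos Θ - y * sin Θ) / √z) ((x * sin Θ + y * cos Θ) / √z) (-1)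
        (4 * t - z ^ 2) := by
  funext t
  unfold XΘ arcPoint
  split_ifs
  · simp only [one_mul]
  · exact Prod.ext (by ring) (Prod.ext (by ring) (neg_one_mul _).symm)

section Piecewise

variable {E : Type*} [NormedAddCommGroup E] [NormedSpace ℝ E] {f g : ℝ → E} {f' : E} {c t : ℝ}

lemma hasDerivAt_ite_le_of_lt (ht : t < c) (hf : HasDerivAt f f' t) :
    HasDerivAt (fun τ => if τ ≤ c then f τ else g τ) f' t :=
  hf.congr_of_eventuallyEq <| (eventually_le_nhds ht).mono fun _ hτ => if_pos hτ

lemma hasDerivAt_ite_le_of_gt (ht : c < t) (hg : HasDerivAt g f' t) :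
    HasDerivAt (fun τ => if τ ≤ c then f τ else g τ) f' t :=
  hg.congr_of_eventuallyEq <| (eventually_gt_nhds ht).mono fun _ hτ => if_neg hτ.not_ge

end Piecewise

/-- The piecewise curve `XΘ` is continuous on `[0,∞)`, starts at `(x,y,z)` and solves
`X' = b(X)` at every positive time except `t = z²/4`. -/
theorem piecewise_flow_solves_ODE (Θ x y z : ℝ) (hz : 0 < z) (hP : x ^ 2 + y ^ 2 ≤ z) :
    ContinuousOn (XΘ Θ x y z) (Set.Ici (0 : ℝ)) ∧
    XΘ Θ x y z 0 = (x, y, z) ∧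
    ∀ t ∈ Set.Ioi (0 : ℝ) \ {z ^ 2 / 4},
      HasDerivAt (XΘ Θ x y z) (bfield (XΘ Θ x y z t)) t := by
  have hab := div_sqrt_sq_add_div_sqrt_sq_le_one hz hP
  have hab' := div_sqrt_sq_add_div_sqrt_sq_le_one hz ((rotation_sq_add_sq Θ x y).trans_le hP)
  rw [XΘ_eq_ite]
  refine ⟨?_, ?_, ?_⟩
  · refine (Continuous.if_le ((continuous_arcPoint _ _ _).comp (by fun_prop))
      ((continuous_arcPoint _ _ _).comp (by fun_prop)) continuous_id continuous_const
      fun t (ht : t = z ^ 2 / 4) => ?_).continuousOn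
    rw [Function.comp_apply, Function.comp_apply, ht, show z ^ 2 - 4 * (z ^ 2 / 4) = 0 by ring,
      show 4 * (z ^ 2 / 4) - z ^ 2 = 0 by ring, arcPoint_zero, arcPoint_zero]
  · have hsz : √z ≠ 0 := (Real.sqrt_pos.2 hz).ne'
    simp only [if_pos (by positivity : (0 : ℝ) ≤ z ^ 2 / 4), arcPoint, mul_zero, sub_zero,
      sq_rpow_quarter hz.le, div_mul_cancel₀ _ hsz, one_mul, Real.sqrt_sq hz.le]
  · rintro t ⟨-, htne : t ≠ z ^ 2 / 4⟩
    rcases htne.lt_or_gt with hlt | hgt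
    · simp only [if_pos hlt.le]
      refine hasDerivAt_ite_le_of_lt hlt
        (hasDerivAt_arcPoint_comp (by simp) hab ?_ (by linarith))
      simpa using ((hasDerivAt_id t).const_mul 4).const_sub (z ^ 2)
    · simp only [if_neg hgt.not_ge]
      refine hasDerivAt_ite_le_of_gt hgt
        (hasDerivAt_arcPoint_comp (by simp) hab' ?_ (by linarith))
      simpa using ((hasDerivAt_id t).const_mul 4).sub_const (z ^ 2)
end

section
/- The vector field b is not locally of Sobolev class W^{1,1} near the origin: the function g(x,y,z) = -sgn(z)·x/z² restricted to the double paraboloid P = {x²+y² ≤ |z|} satisfies ∫_{P ∩ B_1(0)} |∂_z g| dx dy dz = +∞, where ∂_z g = 2·sgn(z)·x/z³ on the interior of P with z ≠ 0. -/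
open Real MeasureTheory Set

/-- The pointwise `z`-derivative `2x/z³` of the first component of `b` is not locally
integrable: its integral over `{x² + y² ≤ |z|, |z| ≤ 1}` is infinite, so `b ∉ W¹'¹`
near the origin. -/
theorem bfield_not_W11 :
    ∫⁻ p in {p : ℝ × ℝ × ℝ | p.1 ^ 2 + p.2.1 ^ 2 ≤ |p.2.2| ∧ |p.2.2| ≤ 1},
      ENNReal.ofReal |2 * p.1 / p.2.2 ^ 3| = ⊤ := by
  set S := {p : ℝ × ℝ × ℝ | p.1 ^ 2 + p.2.1 ^ 2 ≤ |p.2.2| ∧ |p.2.2| ≤ 1} with hS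
  refine ENNReal.eq_top_of_forall_nnreal_le fun r => ?_
  set t : ℝ := min (1/2) (1/(128*((r:ℝ)+1))) with ht
  have ht0 : 0 < t := lt_min (by norm_num) (by positivity)
  have ht2 : t ≤ 1/2 := min_le_left _ _
  have htr : t ≤ 1/(128*((r:ℝ)+1)) := min_le_right _ _
  set B : Set (ℝ × ℝ × ℝ) := Ioc (t/4) (t/2) ×ˢ (Ioc 0 (t/2) ×ˢ Ioc (t*t) (2*(t*t))) with hB
  have hBS : B ⊆ S := by
    rintro ⟨x, y, z⟩ ⟨hx, hy, hz⟩
    simp only [mem_Ioc] at hx hy hz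
    have hz0 : 0 < z := lt_of_le_of_lt (by positivity) hz.1
    constructor
    · simp only
      rw [abs_of_pos hz0]
      nlinarith [hx.1, hx.2, hy.1, hy.2, hz.1, ht0.le]
    · simp only
      rw [abs_of_pos hz0]
      nlinarith [hz.2, ht2, ht0]
  set c : ENNReal := ENNReal.ofReal (1/(16*t^5)) with hc
  have hmeas : Measurable fun p : ℝ × ℝ × ℝ => ENNReal.ofReal |2 * p.1 / p.2.2 ^ 3| := by
    exact ENNReal.measurable_ofReal.comp (((measurable_fst.const_mul 2).div ((measurable_snd.snd).pow_const 3)).abs)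
  have key : c * volume B ≤ ∫⁻ p in S, ENNReal.ofReal |2 * p.1 / p.2.2 ^ 3| := by
    calc c * volume B = ∫⁻ _ in B, c := (setLIntegral_const B c).symm
    _ ≤ ∫⁻ p in B, ENNReal.ofReal |2 * p.1 / p.2.2 ^ 3| := by
        refine setLIntegral_mono hmeas fun p hp => ?_
        obtain ⟨x, y, z⟩ := p
        obtain ⟨hx, hy, hz⟩ := hp
        simp only [mem_Ioc] at hx hy hz
        have hz0 : 0 < z := lt_of_le_of_lt (by positivity) hz.1
        refine ENNReal.ofReal_le_ofReal ?_
        have habs : |2 * x / z ^ 3| = 2 * x / z ^ 3 := by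
          apply abs_of_pos
          have hx0 : 0 < x := lt_of_le_of_lt (by positivity) hx.1
          positivity
        rw [habs, div_le_div_iff₀ (by positivity) (by positivity)]
        have h6 : z ^ 3 ≤ (2 * (t * t)) ^ 3 := pow_le_pow_left₀ hz0.le hz.2 3
        nlinarith [hx.1, ht0, mul_pos ht0 ht0, pow_pos ht0 5]
    _ ≤ ∫⁻ p in S, ENNReal.ofReal |2 * p.1 / p.2.2 ^ 3| := lintegral_mono_set hBS
  have hvol : volume B = ENNReal.ofReal (t/4) * (ENNReal.ofReal (t/2) * ENNReal.ofReal (t*t)) := by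
    simp [hB, MeasureTheory.Measure.volume_eq_prod, Measure.prod_prod, Real.volume_Ioc]
    ring_nf
  refine le_trans ?_ key
  rw [hvol, hc, ← ENNReal.ofReal_mul (by positivity : (0:ℝ) ≤ t/2),
    ← ENNReal.ofReal_mul (by positivity : (0:ℝ) ≤ t/4),
    ← ENNReal.ofReal_mul (by positivity : (0:ℝ) ≤ 1/(16*t^5)),
    ← ENNReal.ofReal_coe_nnreal]
  apply ENNReal.ofReal_le_ofReal
  have h1 : 1/(16*t^5) * (t/4 * (t/2 * (t*t))) = 1/(128*t) := by
    field_simp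
    ring
  rw [h1, le_div_iff₀ (by positivity : (0:ℝ) < 128*t)]
  have h2 : (128*((r:ℝ)+1)) * (1/(128*((r:ℝ)+1))) = 1 := by
    field_simp
  have h3 : (128*((r:ℝ)+1)) * t ≤ (128*((r:ℝ)+1)) * (1/(128*((r:ℝ)+1))) :=
    mul_le_mul_of_nonneg_left htr (by positivity)
  nlinarith [r.coe_nonneg, ht0]
end
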